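/- Let F be a field of characteristic zero and f = a/b ∈ F(t, x₁, …, x_m) with a, b ∈ F[t, x₁, …, x_m] and gcd(a,b) = 1. If there exists a nonzero operator L = Σ_{i=0}^ρ ℓ_i D_t^i with ℓ_i ∈ F(t), ℓ_ρ ≠ 0, such that L(f) = 0 (where D_t = ∂/∂t), then the denominator b is split, i.e., b = c·q(t)·r(x₁,…,x_m) for some polynomials q ∈ F[t], r ∈ F[x₁, …, x_m], and c ∈ F. -/

import Mathlib

/-!
Write `K = F(x₁, …, x_m)`, so that `f ∈ K(t)`. If a prime `p ∈ K[t]` divides the denominator of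
`f` with multiplicity `e > 0`, then in characteristic zero `D_t^i f` has a pole of order exactly
`e + i` at `p`. Unless `p` divides the numerator of `ℓ_ρ` or the denominator of some `ℓ_i` with
`i < ρ`, the term `ℓ_ρ D_t^ρ f` of `L(f)` then has a strictly larger `p`-adic pole than all the
others, so `L(f) ≠ 0`. Hence every prime factor of the denominator of `f` divides a fixed nonzero
`c ∈ F[t]`, and `b ∣ a c^n` in `K[t]`. By Gauss's lemma and `gcd(a, b) = 1` the primitive part of
`b` divides `c^n` in `F[x][t]`, and a divisor of a nonzero polynomial in `t` alone lies in `F[t]`.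
-/

open Polynomial

/-- The derivative `d/dt` on `K(t)` (with constants `K`), by the quotient rule on the
reduced representation. -/
noncomputable def ratDeriv {K : Type*} [Field K] (f : RatFunc K) : RatFunc K :=
  (algebraMap K[X] (RatFunc K) (derivative f.num) * algebraMap K[X] (RatFunc K) f.denom -
      algebraMap K[X] (RatFunc K) f.num * algebraMap K[X] (RatFunc K) (derivative f.denom)) /
    algebraMap K[X] (RatFunc K) (f.denom ^ 2)

/-- The natural embedding `F(t) → K(t)` induced by `F ⊆ K`. -/
noncomputable def liftRF {F K : Type*} [Field F] [Field K] [Algebra F K] :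
    RatFunc F →+* RatFunc K :=
  RatFunc.mapRingHom (Polynomial.mapRingHom (algebraMap F K)) (by
    intro q hq
    simp only [Submonoid.mem_comap, Polynomial.coe_mapRingHom]
    exact mem_nonZeroDivisors_of_ne_zero
      ((Polynomial.map_ne_zero_iff (algebraMap F K).injective).mpr
        (nonZeroDivisors.ne_zero hq)))

/-- The embedding of `F[t, x₁, …, x_m] = (F[x])[t]` into `F(t, x₁, …, x_m) = K(t)`,
where `K = F(x₁, …, x_m)`. -/
noncomputable def polyToRF {F : Type*} [Field F] (m : ℕ)
    (u : Polynomial (MvPolynomial (Fin m) F)) :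
    RatFunc (FractionRing (MvPolynomial (Fin m) F)) :=
  algebraMap (Polynomial (FractionRing (MvPolynomial (Fin m) F))) _
    (u.map (algebraMap (MvPolynomial (Fin m) F) (FractionRing (MvPolynomial (Fin m) F))))

open IsDedekindDomain WithZero

theorem exists_dvd_pow_of_forall_prime_dvd {α : Type*} [CommMonoidWithZero α]
    [UniqueFactorizationMonoid α] {a : α} (b : α) (ha : a ≠ 0)
    (h : ∀ p, Prime p → p ∣ a → p ∣ b) : ∃ n, a ∣ b ^ n := by
  induction a using UniqueFactorizationMonoid.induction_on_prime with
  | h₁ => exact absurd rfl ha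
  | h₂ x hx => exact ⟨0, hx.dvd⟩
  | h₃ a p ha' hp ih =>
    obtain ⟨n, hn⟩ := ih ha' fun q hq hqa => h q hq (dvd_mul_of_dvd_right hqa p)
    exact ⟨n + 1, pow_succ' b n ▸ mul_dvd_mul (h p hp (dvd_mul_right p a)) hn⟩

theorem MvPolynomial.exists_eq_C_of_dvd_C {σ R : Type*} [CommRing R] [IsDomain R]
    {h : MvPolynomial σ R} {r : R} (hr : r ≠ 0) (hh : h ∣ C r) : ∃ s, h = C s := by
  obtain ⟨g, hg⟩ := hh
  have hCr : (C r : MvPolynomial σ R) ≠ 0 := by simpa using hr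
  have h0 : h ≠ 0 := by rintro rfl; simp_all
  have g0 : g ≠ 0 := by rintro rfl; simp_all
  have hdeg := congrArg totalDegree hg
  rw [totalDegree_C, totalDegree_mul_of_isDomain h0 g0] at hdeg
  exact ⟨_, totalDegree_eq_zero_iff_eq_C.mp (by omega)⟩

theorem Polynomial.exists_eq_map_of_dvd_map {σ F : Type*} [CommRing F] [IsDomain F]
    {h : (MvPolynomial σ F)[X]} {Q : F[X]} (hQ : Q ≠ 0)
    (hh : h ∣ Q.map (algebraMap F (MvPolynomial σ F))) :
    ∃ q : F[X], h = q.map (algebraMap F (MvPolynomial σ F)) := by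
  -- `e : (F[x])[t] ≃ (F[t])[x]` turns `Q.map` into a constant
  set e := (MvPolynomial.optionEquivLeft F σ).symm.trans (MvPolynomial.optionEquivRight F σ)
  have he : ∀ q : F[X], e (q.map (algebraMap F (MvPolynomial σ F))) = MvPolynomial.C q := by
    have hcomp : (e : (MvPolynomial σ F)[X] →ₐ[F] _).comp (mapAlg F (MvPolynomial σ F)) =
        IsScalarTower.toAlgHom F F[X] (MvPolynomial σ F[X]) :=
      algHom_ext (by simp [e, mapAlg_eq_map, MvPolynomial.optionEquivLeft_symm_X])
    intro q
    rw [← mapAlg_eq_map]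
    exact AlgHom.congr_fun hcomp q
  obtain ⟨s, hs⟩ := MvPolynomial.exists_eq_C_of_dvd_C hQ (he Q ▸ _root_.map_dvd e hh)
  exact ⟨s, e.injective (by rw [hs, he])⟩

theorem IsRelPrime.exists_eq_C_mul_dvd_of_map_dvd {R K : Type*} [CommRing R] [IsDomain R]
    [UniqueFactorizationMonoid R] [Field K] [Algebra R K] [IsFractionRing R K] {a b c : R[X]}
    (hab : IsRelPrime a b) (h : b.map (algebraMap R K) ∣ (a * c).map (algebraMap R K)) :
    ∃ (r : R) (d : R[X]), b = C r * d ∧ d ∣ c := by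
  classical
  let _ : NormalizationMonoid R :=
    UniqueFactorizationMonoid.strongNormalizationMonoid.toNormalizationMonoid
  let _ : NormalizedGCDMonoid R := UniqueFactorizationMonoid.toNormalizedGCDMonoid R
  have hac : b.primPart ∣ a * c := b.isPrimitive_primPart.dvd_of_fraction_map_dvd_fraction_map
    ((Polynomial.map_dvd _ b.primPart_dvd).trans h)
  exact ⟨b.content, b.primPart, b.eq_C_content_mul_primPart,
    (hab.symm.of_dvd_left b.primPart_dvd).dvd_of_dvd_mul_left hac⟩

def Prime.heightOneSpectrum {R : Type*} [CommRing R] [IsDomain R] {r : R} (hr : Prime r) :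
    HeightOneSpectrum R where
  asIdeal := Ideal.span {r}
  isPrime := (Ideal.span_singleton_prime hr.ne_zero).mpr hr
  ne_bot := by simpa using hr.ne_zero

def HasPoleOfOrder {R L : Type*} [CommRing R] [Field L] [Algebra R L] (r : R) (k : ℕ) (g : L) :
    Prop :=
  ∃ a c : R, ¬ r ∣ a ∧ ¬ r ∣ c ∧ g = algebraMap R L a / algebraMap R L (r ^ k * c)

section Valuation

variable {R L : Type*} [CommRing R] [IsDedekindDomain R] [Field L] [Algebra R L]
  [IsFractionRing R L] {r : R} (hr : Prime r)

theorem valuation_heightOneSpectrum_self :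
    hr.heightOneSpectrum.valuation L (algebraMap R L r) = exp (-1) := by
  rw [HeightOneSpectrum.valuation_of_algebraMap]
  exact HeightOneSpectrum.intValuation_singleton _ hr.ne_zero rfl

theorem valuation_heightOneSpectrum_eq_one {a : R} (ha : ¬ r ∣ a) :
    hr.heightOneSpectrum.valuation L (algebraMap R L a) = 1 := by
  rw [HeightOneSpectrum.valuation_eq_one_iff_notMem]
  simpa [Prime.heightOneSpectrum, Ideal.mem_span_singleton] using ha

theorem valuation_heightOneSpectrum_div_le_one (a : R) {c : R} (hc : ¬ r ∣ c) :
    hr.heightOneSpectrum.valuation L (algebraMap R L a / algebraMap R L c) ≤ 1 := by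
  rw [map_div₀, valuation_heightOneSpectrum_eq_one hr hc, div_one]
  exact HeightOneSpectrum.valuation_le_one _ a

theorem one_le_valuation_heightOneSpectrum_div {a c : R} (ha : ¬ r ∣ a) (hc : c ≠ 0) :
    1 ≤ hr.heightOneSpectrum.valuation L (algebraMap R L a / algebraMap R L c) := by
  rw [map_div₀, valuation_heightOneSpectrum_eq_one hr ha, one_le_div₀]
  · exact HeightOneSpectrum.valuation_le_one _ c
  · exact zero_lt_iff.mpr (by simpa using hc)

theorem HasPoleOfOrder.valuation_eq {k : ℕ} {g : L} (h : HasPoleOfOrder r k g) :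
    hr.heightOneSpectrum.valuation L g = exp (k : ℤ) := by
  obtain ⟨a, c, ha, hc, rfl⟩ := h
  rw [map_div₀, map_mul, map_mul, map_pow, map_pow, valuation_heightOneSpectrum_eq_one hr ha,
    valuation_heightOneSpectrum_eq_one hr hc, valuation_heightOneSpectrum_self, mul_one,
    one_div, ← exp_nsmul, ← exp_neg]
  simp

end Valuation

section RatFunc

variable {K : Type*} [Field K]

theorem ratDeriv_div (A : K[X]) {B : K[X]} (hB : B ≠ 0) :
    ratDeriv (algebraMap K[X] (RatFunc K) A / algebraMap K[X] (RatFunc K) B) =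
      algebraMap K[X] (RatFunc K) (derivative A * B - A * derivative B) /
        algebraMap K[X] (RatFunc K) (B ^ 2) := by
  set f := algebraMap K[X] (RatFunc K) A / algebraMap K[X] (RatFunc K) B
  have hf : f.num * B = A * f.denom := (RatFunc.num_mul_eq_mul_denom_iff hB).mpr rfl
  have hf' := congrArg derivative hf
  simp only [derivative_mul] at hf'
  rw [ratDeriv, div_eq_div_iff (RatFunc.algebraMap_ne_zero (pow_ne_zero 2 f.denom_ne_zero))
    (RatFunc.algebraMap_ne_zero (pow_ne_zero 2 hB))]
  simp only [← map_mul, ← map_sub]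
  congr 1
  linear_combination (f.denom * B) * hf' - (derivative f.denom * B + f.denom * derivative B) * hf

theorem Prime.not_dvd_derivative [CharZero K] {p : K[X]} (hp : Prime p) : ¬ p ∣ derivative p :=
  fun h => hp.not_isUnit (hp.irreducible.separable.isUnit_of_dvd' dvd_rfl h)

theorem hasPoleOfOrder_ratDeriv [CharZero K] {p : K[X]} (hp : Prime p) {k : ℕ} {g : RatFunc K}
    (hk : k ≠ 0) (h : HasPoleOfOrder p k g) : HasPoleOfOrder p (k + 1) (ratDeriv g) := by
  obtain ⟨j, rfl⟩ := Nat.exists_eq_add_one_of_ne_zero hk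
  obtain ⟨A, B, hA, hB, rfl⟩ := h
  have hB0 : B ≠ 0 := by rintro rfl; exact hB (dvd_zero p)
  have hpB : p ^ (j + 1) * B ≠ 0 := mul_ne_zero (pow_ne_zero _ hp.ne_zero) hB0
  have hunit : IsUnit (C ((j + 1 : ℕ) : K)) := isUnit_C.mpr (IsUnit.mk0 _ (by positivity))
  -- modulo `p` the new numerator is `-(j + 1) A p' B`
  refine ⟨p * (derivative A * B - A * derivative B) - C ((j + 1 : ℕ) : K) * A * derivative p * B,
    B ^ 2, ?_, fun h => hB (hp.dvd_of_dvd_pow h), ?_⟩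
  · rw [dvd_sub_right (dvd_mul_right _ _)]
    simp only [hp.dvd_mul, not_or]
    exact ⟨⟨⟨fun h => hp.not_isUnit (isUnit_of_dvd_unit h hunit), hA⟩, hp.not_dvd_derivative⟩,
      hB⟩
  · rw [ratDeriv_div A hpB, div_eq_div_iff (RatFunc.algebraMap_ne_zero (pow_ne_zero 2 hpB))
        (RatFunc.algebraMap_ne_zero (mul_ne_zero (pow_ne_zero _ hp.ne_zero) (pow_ne_zero 2 hB0))),
      ← map_mul, ← map_mul, derivative_mul, derivative_pow]
    refine congrArg _ ?_
    simp only [Nat.add_sub_cancel, map_natCast]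
    push_cast
    ring

theorem hasPoleOfOrder_iterate_ratDeriv [CharZero K] {p : K[X]} (hp : Prime p) {k : ℕ}
    {g : RatFunc K} (hk : k ≠ 0) (h : HasPoleOfOrder p k g) (i : ℕ) :
    HasPoleOfOrder p (k + i) (ratDeriv^[i] g) := by
  induction i with
  | zero => exact h
  | succ i ih =>
    rw [Function.iterate_succ_apply']
    exact hasPoleOfOrder_ratDeriv hp (k := k + i) (by omega) ih

theorem RatFunc.exists_hasPoleOfOrder_of_dvd_denom {p : K[X]} (hp : Prime p) {g : RatFunc K}
    (h : p ∣ g.denom) : ∃ k ≠ 0, HasPoleOfOrder p k g := by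
  obtain ⟨k, B, hB, hdenom⟩ := WfDvdMonoid.max_power_factor g.denom_ne_zero hp.irreducible
  refine ⟨k, ?_, g.num, B, ?_, hB, ?_⟩
  · rintro rfl
    exact hB (by simpa [hdenom] using h)
  · exact fun hnum => hp.not_isUnit (g.isCoprime_num_denom.isUnit_of_dvd' hnum h)
  · rw [← hdenom, RatFunc.num_div_denom]

theorem RatFunc.dvd_mul_of_denom_dvd {A B D : K[X]} (hB : B ≠ 0) {f : RatFunc K}
    (hf : f = algebraMap K[X] (RatFunc K) A / algebraMap K[X] (RatFunc K) B) (hD : f.denom ∣ D) :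
    B ∣ A * D := by
  obtain ⟨w, rfl⟩ := hD
  have h := (RatFunc.num_mul_eq_mul_denom_iff hB).mpr hf
  exact ⟨f.num * w, by linear_combination (-w) * h⟩

end RatFunc

theorem liftRF_eq {F K : Type*} [Field F] [Field K] [Algebra F K] (x : RatFunc F) :
    liftRF x = algebraMap K[X] (RatFunc K) (x.num.map (algebraMap F K)) /
      algebraMap K[X] (RatFunc K) (x.denom.map (algebraMap F K)) := by
  conv_lhs => rw [← RatFunc.num_div_denom x]
  rw [liftRF, RatFunc.coe_mapRingHom_eq_coe_map, RatFunc.map_apply_div]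
  simp [Polynomial.coe_mapRingHom]

section Annihilator

variable {F K : Type*} [Field F] [Field K] [CharZero K] [Algebra F K] {f : RatFunc K} {ρ : ℕ}
  {ℓ : ℕ → RatFunc F}

theorem Prime.dvd_num_or_dvd_denom_of_dvd_denom
    (hL : ∑ i ∈ Finset.range (ρ + 1), liftRF (ℓ i) * ratDeriv^[i] f = 0)
    {p : K[X]} (hp : Prime p) (hpf : p ∣ f.denom) :
    p ∣ (ℓ ρ).num.map (algebraMap F K) ∨ ∃ i < ρ, p ∣ (ℓ i).denom.map (algebraMap F K) := by
  by_contra! h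
  obtain ⟨hnum, hdenom⟩ := h
  obtain ⟨e, he, hpole⟩ := RatFunc.exists_hasPoleOfOrder_of_dvd_denom hp hpf
  set v := hp.heightOneSpectrum.valuation (RatFunc K)
  have hlead : exp ((e + ρ : ℕ) : ℤ) ≤ v (liftRF (ℓ ρ) * ratDeriv^[ρ] f) := by
    rw [map_mul, (hasPoleOfOrder_iterate_ratDeriv hp he hpole ρ).valuation_eq hp, liftRF_eq]
    exact le_mul_of_one_le_left' (one_le_valuation_heightOneSpectrum_div hp hnum
      ((Polynomial.map_ne_zero_iff (algebraMap F K).injective).mpr (ℓ ρ).denom_ne_zero))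
  have hrest : v (∑ i ∈ Finset.range ρ, liftRF (ℓ i) * ratDeriv^[i] f) <
      exp ((e + ρ : ℕ) : ℤ) := by
    refine Valuation.map_sum_lt _ exp_ne_zero fun i hi => ?_
    have hi : i < ρ := Finset.mem_range.mp hi
    calc v (liftRF (ℓ i) * ratDeriv^[i] f) ≤ exp ((e + i : ℕ) : ℤ) := by
          rw [map_mul, (hasPoleOfOrder_iterate_ratDeriv hp he hpole i).valuation_eq hp,
            liftRF_eq]
          exact mul_le_of_le_one_left'
            (valuation_heightOneSpectrum_div_le_one hp _ (hdenom i hi))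
      _ < exp ((e + ρ : ℕ) : ℤ) := exp_lt_exp.mpr (by omega)
  have hsum := Valuation.map_add_eq_of_lt_left v (hrest.trans_le hlead)
  rw [add_comm, ← Finset.sum_range_succ, hL, map_zero] at hsum
  rw [← hsum] at hlead
  exact exp_ne_zero (le_zero_iff.mp hlead)

theorem RatFunc.exists_denom_dvd_pow
    (hL : ∑ i ∈ Finset.range (ρ + 1), liftRF (ℓ i) * ratDeriv^[i] f = 0) :
    ∃ n, f.denom ∣
      (((ℓ ρ).num * ∏ i ∈ Finset.range ρ, (ℓ i).denom).map (algebraMap F K)) ^ n := by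
  refine exists_dvd_pow_of_forall_prime_dvd _ f.denom_ne_zero fun p hp hpf => ?_
  rw [Polynomial.map_mul, Polynomial.map_prod]
  rcases hp.dvd_num_or_dvd_denom_of_dvd_denom hL hpf with h | ⟨i, hi, h⟩
  · exact dvd_mul_of_dvd_left h _
  · exact dvd_mul_of_dvd_right (h.trans (Finset.dvd_prod_of_mem
      (fun i => (ℓ i).denom.map (algebraMap F K)) (Finset.mem_range.mpr hi))) _

end Annihilator

/-- If `f = a/b ∈ F(t, x₁, …, x_m)` with `a, b ∈ F[t, x₁, …, x_m]`, `gcd(a, b) = 1`, is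
annihilated by a nonzero operator `L = Σ_{i=0}^ρ ℓ_i D_t^i` with `ℓ_i ∈ F(t)` and
`ℓ_ρ ≠ 0`, then the denominator `b` is split: `b = q(t) · r(x₁, …, x_m)` with
`q ∈ F[t]` and `r ∈ F[x₁, …, x_m]`. -/
theorem Dt_separable_denom_split {F : Type*} [Field F] [CharZero F] (m : ℕ)
    (a b : Polynomial (MvPolynomial (Fin m) F)) (hb : b ≠ 0) (hab : IsRelPrime a b)
    (f : RatFunc (FractionRing (MvPolynomial (Fin m) F)))
    (hf : f = polyToRF m a / polyToRF m b)
    (ρ : ℕ) (ℓ : ℕ → RatFunc F) (hρ : ℓ ρ ≠ 0)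
    (hL : ∑ i ∈ Finset.range (ρ + 1), liftRF (ℓ i) * ratDeriv^[i] f = 0) :
    ∃ (q : Polynomial F) (r : MvPolynomial (Fin m) F),
      b = Polynomial.C r * q.map (algebraMap F (MvPolynomial (Fin m) F)) := by
  set A := MvPolynomial (Fin m) F
  set K := FractionRing A
  set c := (ℓ ρ).num * ∏ i ∈ Finset.range ρ, (ℓ i).denom
  have hc : c ≠ 0 := mul_ne_zero (RatFunc.num_ne_zero hρ)
    (Finset.prod_ne_zero_iff.mpr fun i _ => RatFunc.denom_ne_zero _)
  obtain ⟨n, hn⟩ := RatFunc.exists_denom_dvd_pow hL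
  have hbK0 : b.map (algebraMap A K) ≠ 0 :=
    (Polynomial.map_ne_zero_iff (IsFractionRing.injective A K)).mpr hb
  have hbK : b.map (algebraMap A K) ∣ (a * (c ^ n).map (algebraMap F A)).map (algebraMap A K) := by
    rw [Polynomial.map_mul, Polynomial.map_map, ← IsScalarTower.algebraMap_eq, Polynomial.map_pow]
    exact RatFunc.dvd_mul_of_denom_dvd hbK0 hf hn
  obtain ⟨r, d, rfl, hd⟩ := hab.exists_eq_C_mul_dvd_of_map_dvd hbK
  obtain ⟨q, rfl⟩ := exists_eq_map_of_dvd_map (pow_ne_zero n hc) hd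
  exact ⟨q, r, rfl⟩
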